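/- Let G be a finite group. A commutative ring with G-action k is Nullstellensatzian in the category of G-rings if and only if k is G-equivariantly isomorphic to Fun(G, F) for some algebraically closed field F, where Fun(G,F) has G-action (g·φ)(h) = φ(hg). -/

import Mathlib

/-!
A Nullstellensatzian `G`-ring `k` admits an equivariant retraction of the coinduced algebra
`k → Fun(G, k)`, `x ↦ (h ↦ h • x)`. The image of the indicator function of `1` is an idempotent
`e` whose translates are orthogonal and sum to `1`, and this splits `k` equivariantly as
`Fun(G, K)` with `K = k ⧸ (1 - e)`. The constants of `K` are invariant in `k`, so applying the
Nullstellensatz property to `k ⧸ (b)` and `k[X] ⧸ (q)` for invariant `b` and monic invariant `q`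
shows that `K` is a field and that it is algebraically closed.

Conversely, if `k ≅ Fun(G, F)` with `F` algebraically closed, a nonzero finitely presented
`G`-equivariant `k`-algebra `A` cut down by the idempotent at `1` is a nonzero finitely generated
`F`-algebra, which has an `F`-point `χ` by the weak Nullstellensatz; `a ↦ (h ↦ χ (h • a))` is
the required retraction.
-/

open Polynomial

section QuotientAction

variable {G R : Type*} [Group G] [CommRing R] [MulSemiringAction G R]

def Ideal.quotientSMulHom (I : Ideal R)
    (hI : ∀ g : G, I ≤ I.comap (MulSemiringAction.toRingHom G R g)) :
    G →* (R ⧸ I →+* R ⧸ I) where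
  toFun g := Ideal.quotientMap I _ (hI g)
  map_one' := Ideal.Quotient.ringHom_ext <| RingHom.ext fun x => by simp
  map_mul' g h := Ideal.Quotient.ringHom_ext <| RingHom.ext fun x => by simp [mul_smul]

abbrev Ideal.quotientMulSemiringAction (I : Ideal R)
    (hI : ∀ g : G, I ≤ I.comap (MulSemiringAction.toRingHom G R g)) :
    MulSemiringAction G (R ⧸ I) :=
  MulSemiringAction.compHom _ (I.quotientSMulHom hI)

theorem Ideal.span_singleton_le_comap_smul {r : R} (hr : ∀ g : G, g • r = r) (g : G) :
    Ideal.span {r} ≤ (Ideal.span {r}).comap (MulSemiringAction.toRingHom G R g) := by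
  rw [Ideal.span_le, Set.singleton_subset_iff, SetLike.mem_coe, Ideal.mem_comap]
  simp [hr g]

theorem Ideal.Quotient.mk_span_one_sub (e : R) :
    Ideal.Quotient.mk (Ideal.span {1 - e}) e = 1 := by
  rw [← map_one (Ideal.Quotient.mk _), Ideal.Quotient.mk_eq_mk_iff_sub_mem,
    Ideal.mem_span_singleton]
  exact ⟨-1, by ring⟩

end QuotientAction

/-- Modelled on the indicator function of `1` in `G → F` with the right-translation action. -/
structure IsRegularIdempotent (G : Type*) {R : Type*} [Group G] [Fintype G] [CommRing R]
    [MulSemiringAction G R] (e : R) : Prop where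
  sum_smul : ∑ g : G, g • e = 1
  smul_mul_self : ∀ g : G, g ≠ 1 → g • e * e = 0

namespace IsRegularIdempotent

variable {G R : Type*} [Group G] [CommRing R] [MulSemiringAction G R] {e : R}

variable (G) in
def quotientPi (e : R) : R →+* (G → R ⧸ Ideal.span {1 - e}) :=
  RingHom.pi fun h => (Ideal.Quotient.mk _).comp (MulSemiringAction.toRingHom G R h)

theorem quotientPi_apply (x : R) (h : G) :
    quotientPi G e x h = Ideal.Quotient.mk _ (h • x) :=
  rfl

theorem quotientPi_smul (g : G) (x : R) :
    quotientPi G e (g • x) = fun h => quotientPi G e x (h * g) := by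
  funext h
  rw [quotientPi_apply, quotientPi_apply, mul_smul]

variable [Fintype G]

theorem mul_self (he : IsRegularIdempotent G e) : e * e = e := by
  calc e * e = ∑ g : G, g • e * e := by
        rw [Finset.sum_eq_single_of_mem 1 (Finset.mem_univ _) fun g _ hg => he.smul_mul_self g hg,
          one_smul]
    _ = e := by rw [← Finset.sum_mul, he.sum_smul, one_mul]

theorem map {S : Type*} [CommRing S] [MulSemiringAction G S] (he : IsRegularIdempotent G e)
    (f : R →+* S) (hf : ∀ (g : G) (x : R), f (g • x) = g • f x) :
    IsRegularIdempotent G (f e) where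
  sum_smul := by simp only [← hf, ← map_sum, he.sum_smul, map_one]
  smul_mul_self g hg := by rw [← hf, ← map_mul, he.smul_mul_self g hg, map_zero]

theorem mul_eq_zero_of_mem (he : IsRegularIdempotent G e) {y : R}
    (hy : y ∈ Ideal.span {1 - e}) : e * y = 0 := by
  obtain ⟨c, rfl⟩ := Ideal.mem_span_singleton.mp hy
  rw [← mul_assoc, mul_sub, mul_one, he.mul_self, sub_self, zero_mul]

theorem span_one_sub_ne_top [Nontrivial R] (he : IsRegularIdempotent G e) :
    Ideal.span {1 - e} ≠ ⊤ := by
  intro htop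
  have he0 : e = 0 := by
    simpa using he.mul_eq_zero_of_mem (htop ▸ Submodule.mem_top : (1 : R) ∈ _)
  simpa [he0] using he.sum_smul

theorem mk_smul_of_ne_one (he : IsRegularIdempotent G e) {g : G} (hg : g ≠ 1) :
    Ideal.Quotient.mk (Ideal.span {1 - e}) (g • e) = 0 := by
  rw [← mul_one (Ideal.Quotient.mk _ _), ← Ideal.Quotient.mk_span_one_sub e, ← map_mul,
    he.smul_mul_self g hg, map_zero]

theorem quotientPi_injective (he : IsRegularIdempotent G e) :
    Function.Injective (quotientPi G e) := by
  rw [injective_iff_map_eq_zero]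
  intro x hx
  have hzero : ∀ h : G, h • e * x = 0 := fun h => by
    have hmem : h⁻¹ • x ∈ Ideal.span {1 - e} :=
      Ideal.Quotient.eq_zero_iff_mem.mp (congrFun hx h⁻¹)
    rw [← smul_zero h, ← he.mul_eq_zero_of_mem hmem, smul_mul', smul_inv_smul]
  rw [← one_mul x, ← he.sum_smul, Finset.sum_mul, Finset.sum_eq_zero fun h _ => hzero h]

theorem quotientPi_surjective (he : IsRegularIdempotent G e) :
    Function.Surjective (quotientPi G e) := by
  intro φ
  choose y hy using fun h => Ideal.Quotient.mk_surjective (φ h)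
  refine ⟨∑ h : G, h⁻¹ • (e * y h), funext fun h' => ?_⟩
  rw [quotientPi_apply, Finset.smul_sum, map_sum, Finset.sum_eq_single h']
  · rw [smul_inv_smul, map_mul, Ideal.Quotient.mk_span_one_sub, one_mul, hy]
  · intro h _ hne
    rw [← mul_smul, smul_mul', map_mul, he.mk_smul_of_ne_one, zero_mul]
    rwa [Ne, mul_inv_eq_one, eq_comm]
  · exact fun h => absurd (Finset.mem_univ h') h

noncomputable def ringEquivFun (he : IsRegularIdempotent G e) :
    R ≃+* (G → R ⧸ Ideal.span {1 - e}) :=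
  RingEquiv.ofBijective (quotientPi G e) ⟨he.quotientPi_injective, he.quotientPi_surjective⟩

theorem ringEquivFun_smul (he : IsRegularIdempotent G e) (g : G) (x : R) :
    he.ringEquivFun (g • x) = fun h => he.ringEquivFun x (h * g) :=
  quotientPi_smul g x

end IsRegularIdempotent

theorem isRegularIdempotent_symm_single {G R K : Type*} [Group G] [Fintype G] [DecidableEq G]
    [CommRing R] [MulSemiringAction G R] [CommRing K] (Φ : R ≃+* (G → K))
    (hΦ : ∀ (g : G) (x : R), Φ (g • x) = fun h => Φ x (h * g)) :
    IsRegularIdempotent G (Φ.symm (Pi.single 1 1)) where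
  sum_smul := by
    apply Φ.injective
    funext h
    simp [hΦ, Finset.sum_apply, Pi.single_apply, mul_eq_one_iff_inv_eq]
  smul_mul_self g hg := by
    apply Φ.injective
    funext h
    simp only [map_mul, hΦ, Pi.mul_apply, RingEquiv.apply_symm_apply, Pi.single_apply, map_zero,
      Pi.zero_apply]
    split_ifs with h1 h2 <;> simp_all

/-- `G → R` with the right-translation action `(g • φ) h = φ (h * g)`; a type synonym, since
`G → R` already carries the pointwise action when `G` acts on `R`. -/
def Fun (G R : Type*) : Type _ := G → R

namespace Fun

variable {G R : Type*} [Group G] [CommRing R]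

instance : CommRing (Fun G R) := inferInstanceAs (CommRing (G → R))

instance [Nontrivial R] : Nontrivial (Fun G R) := inferInstanceAs (Nontrivial (G → R))

def equiv : Fun G R ≃+* (G → R) := RingEquiv.refl _

instance : MulSemiringAction G (Fun G R) where
  smul g φ := equiv.symm fun h => equiv φ (h * g)
  one_smul φ := funext fun h => congrArg φ (mul_one h)
  mul_smul g₁ g₂ φ := funext fun h => congrArg φ (mul_assoc h g₁ g₂).symm
  smul_zero _ := rfl
  smul_add _ _ _ := rfl
  smul_one _ := rfl
  smul_mul _ _ _ := rfl

theorem equiv_smul (g : G) (φ : Fun G R) : equiv (g • φ) = fun h => equiv φ (h * g) := rfl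

variable [MulSemiringAction G R]

variable (G) in
def coind : R →+* Fun G R :=
  (equiv (G := G)).symm.toRingHom.comp (RingHom.pi (MulSemiringAction.toRingHom G R))

theorem coind_smul (g : G) (x : R) : coind G (g • x) = g • coind G x :=
  funext fun h => (mul_smul h g x).symm

instance : Algebra R (Fun G R) := (coind G).toAlgebra

def untwist : (G → R) ≃ₐ[R] Fun G R :=
  AlgEquiv.ofRingEquiv (f :=
    { toFun := fun φ => equiv.symm fun h => h • φ h
      invFun := fun φ h => h⁻¹ • equiv φ h
      left_inv := fun φ => funext fun h => inv_smul_smul h (φ h)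
      right_inv := fun φ => funext fun h => smul_inv_smul h (equiv φ h)
      map_add' := fun _ _ => funext fun h => smul_add h _ _
      map_mul' := fun _ _ => funext fun h => smul_mul' h _ _ })
    fun _ => by rfl

instance [Fintype G] : Algebra.FinitePresentation R (Fun G R) :=
  .equiv untwist

end Fun

def IsNullstellensatzian (G k : Type) [Group G] [CommRing k] [MulSemiringAction G k] : Prop :=
  Nontrivial k ∧
    ∀ (A : Type) [CommRing A] [MulSemiringAction G A] (α : k →+* A),
      (∀ (g : G) (x : k), α (g • x) = g • α x) →
      (@Algebra.FinitePresentation k A _ _ α.toAlgebra) →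
      Nontrivial A →
      ∃ f : A →+* k, (∀ (g : G) (a : A), f (g • a) = g • f a) ∧ f.comp α = RingHom.id k

namespace IsNullstellensatzian

variable {G k : Type} [Group G] [CommRing k] [MulSemiringAction G k]

theorem exists_algHom (hk : IsNullstellensatzian G k) (A : Type) [CommRing A] [Algebra k A]
    [MulSemiringAction G A] (hA : ∀ (g : G) (x : k), algebraMap k A (g • x) = g • algebraMap k A x)
    [Algebra.FinitePresentation k A] [Nontrivial A] :
    ∃ f : A →ₐ[k] k, ∀ (g : G) (a : A), f (g • a) = g • f a := by
  have hfp : @Algebra.FinitePresentation k A _ _ (algebraMap k A).toAlgebra := by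
    convert ‹Algebra.FinitePresentation k A›
    exact Algebra.algebra_ext _ _ fun _ => rfl
  obtain ⟨f, hf, hfα⟩ := hk.2 A (algebraMap k A) hA hfp ‹_›
  exact ⟨⟨f, fun x => RingHom.congr_fun hfα x⟩, hf⟩

theorem exists_algHom_eq_zero (hk : IsNullstellensatzian G k) {A : Type} [CommRing A]
    [Algebra k A] [MulSemiringAction G A]
    (hA : ∀ (g : G) (x : k), algebraMap k A (g • x) = g • algebraMap k A x)
    [Algebra.FinitePresentation k A] {r : A} (hr : ∀ g : G, g • r = r)
    (hr_top : Ideal.span {r} ≠ ⊤) :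
    ∃ f : A →ₐ[k] k, f r = 0 := by
  have : Nontrivial (A ⧸ Ideal.span {r}) := Ideal.Quotient.nontrivial_iff.mpr hr_top
  have : Algebra.FinitePresentation k (A ⧸ Ideal.span {r}) :=
    .quotient (Submodule.fg_span_singleton r)
  let := (Ideal.span {r}).quotientMulSemiringAction (Ideal.span_singleton_le_comap_smul hr)
  obtain ⟨f, -⟩ := hk.exists_algHom (A ⧸ Ideal.span {r}) fun g x =>
    congrArg (Ideal.Quotient.mk _) (hA g x)
  refine ⟨f.comp (Ideal.Quotient.mkₐ k _), ?_⟩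
  simp [Ideal.Quotient.eq_zero_iff_mem.mpr (Ideal.mem_span_singleton_self r)]

theorem isUnit_of_smul_eq_self (hk : IsNullstellensatzian G k) {b : k}
    (hb : ∀ g : G, g • b = b) (hb0 : b ≠ 0) : IsUnit b := by
  by_contra hu
  obtain ⟨f, hf⟩ := hk.exists_algHom_eq_zero (A := k) (fun _ _ => rfl) hb
    (Ideal.span_singleton_eq_top.not.mpr hu)
  exact hb0 ((f.commutes b).symm.trans hf)

theorem exists_isRoot_of_monic (hk : IsNullstellensatzian G k) {q : k[X]} (hq : q.Monic)
    (hq_deg : q.natDegree ≠ 0) (hq_inv : ∀ g : G, g • q = q) : ∃ x : k, q.IsRoot x := by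
  obtain ⟨f, hf⟩ := hk.exists_algHom_eq_zero (A := k[X]) (fun g x => (smul_C g x).symm) hq_inv
    (Ideal.span_singleton_eq_top.not.mpr fun hu =>
      hq_deg (by rw [hq.isUnit_iff.mp hu, natDegree_one]))
  refine ⟨f X, ?_⟩
  rw [IsRoot, ← coe_aeval_eq_eval, aeval_algHom_apply, aeval_X_left_apply, hf]

variable [Fintype G]

theorem exists_isRegularIdempotent (hk : IsNullstellensatzian G k) :
    ∃ e : k, IsRegularIdempotent G e := by
  classical
  have := hk.1
  obtain ⟨f, hf⟩ := hk.exists_algHom (Fun G k) Fun.coind_smul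
  exact ⟨_, (isRegularIdempotent_symm_single Fun.equiv Fun.equiv_smul).map f.toRingHom hf⟩

theorem exists_isAlgClosed_ringEquiv (hk : IsNullstellensatzian G k) :
    ∃ (F : Type) (fld : Field F),
      letI : Field F := fld
      IsAlgClosed F ∧
        ∃ e : k ≃+* (G → F), ∀ (g : G) (x : k), e (g • x) = fun h => e x (h * g) := by
  obtain ⟨e, he⟩ := hk.exists_isRegularIdempotent
  have := hk.1
  set K := k ⧸ Ideal.span {1 - e}
  have : Nontrivial K := Ideal.Quotient.nontrivial_iff.mpr he.span_one_sub_ne_top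
  obtain ⟨Φ, hΦ⟩ : ∃ Φ : k ≃+* (G → K), ∀ (g : G) (x : k), Φ (g • x) = fun h => Φ x (h * g) :=
    ⟨he.ringEquivFun, he.ringEquivFun_smul⟩
  let ι : K →+* k := Φ.symm.toRingHom.comp (Pi.constRingHom G K)
  let ev : k →+* K := (Pi.evalRingHom _ 1).comp Φ.toRingHom
  have hev : ∀ c, ev (ι c) = c := fun c => by simp [ι, ev]
  have hι : ∀ (g : G) c, g • ι c = ι c := fun g c =>
    Φ.injective (by rw [hΦ]; funext; simp [ι])
  have hK : IsField K := by
    refine ⟨exists_pair_ne K, mul_comm, fun {c} hc => ?_⟩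
    have hιc : ι c ≠ 0 := fun h0 => hc (by rw [← hev c, h0, map_zero])
    simpa [hev] using ((hk.isUnit_of_smul_eq_self (hι · c) hιc).map ev).exists_right_inv
  let := hK.toField
  refine ⟨K, inferInstance, IsAlgClosed.of_exists_root K fun p hp hirr => ?_, Φ, hΦ⟩
  have hinv : ∀ g : G, g • p.map ι = p.map ι := fun g => by
    rw [smul_eq_map, Polynomial.map_map]
    congr 1
    exact RingHom.ext (hι g)
  obtain ⟨x, hx⟩ := hk.exists_isRoot_of_monic (hp.map ι)
    (by rw [natDegree_map]; exact hirr.natDegree_pos.ne') hinv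
  refine ⟨ev x, ?_⟩
  have hevι : ev.comp ι = RingHom.id K := RingHom.ext hev
  simpa [Polynomial.map_map, hevι] using hx.map (f := ev)

end IsNullstellensatzian

theorem exists_algHom_of_finiteType (F A : Type*) [Field F] [IsAlgClosed F] [CommRing A]
    [Nontrivial A] [Algebra F A] [Algebra.FiniteType F A] : Nonempty (A →ₐ[F] F) := by
  obtain ⟨m, hm⟩ := Ideal.exists_maximal A
  let := Ideal.Quotient.field m
  have := finite_of_finite_type_of_isJacobsonRing F (A ⧸ m)
  exact ⟨IsAlgClosed.lift.comp (Ideal.Quotient.mkₐ F m)⟩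

theorem apply_eq_of_apply_symm_single_one {G F k : Type*} [Group G] [DecidableEq G] [CommRing F]
    [CommRing k] (Φ : k ≃+* (G → F)) (χ : k →+* F) (hχ : ∀ a : F, χ (Φ.symm fun _ => a) = a)
    (hχ₁ : χ (Φ.symm (Pi.single 1 1)) = 1) (y : k) : χ y = Φ y 1 := by
  have hy : y * Φ.symm (Pi.single 1 1) = (Φ.symm fun _ => Φ y 1) * Φ.symm (Pi.single 1 1) := by
    apply Φ.injective
    funext h
    by_cases h1 : h = 1 <;> simp [h1]
  calc χ y = χ (y * Φ.symm (Pi.single 1 1)) := by rw [map_mul, hχ₁, mul_one]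
    _ = Φ y 1 := by rw [hy, map_mul, hχ₁, hχ, mul_one]

theorem isNullstellensatzian_of_ringEquiv {G k F : Type} [Group G] [Fintype G] [CommRing k]
    [MulSemiringAction G k] [Field F] [IsAlgClosed F] (Φ : k ≃+* (G → F))
    (hΦ : ∀ (g : G) (x : k), Φ (g • x) = fun h => Φ x (h * g)) :
    IsNullstellensatzian G k := by
  classical
  refine ⟨Φ.toEquiv.nontrivial, fun A _ _ α hα hfp _ => ?_⟩
  let ι : F →+* k := Φ.symm.toRingHom.comp (Pi.constRingHom G F)
  let := ι.toAlgebra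
  let := α.toAlgebra
  let := (α.comp ι).toAlgebra
  have : IsScalarTower F k A := .of_algebraMap_eq fun _ => rfl
  have : Module.Finite F k :=
    .equiv (AlgEquiv.ofRingEquiv (f := Φ.symm) fun _ => rfl).toLinearEquiv
  have : Algebra.FiniteType F A := .trans (S := k) inferInstance inferInstance
  set δ := Φ.symm (Pi.single 1 1)
  have hδ := (isRegularIdempotent_symm_single Φ hΦ).map α hα
  have : Nontrivial (A ⧸ Ideal.span {1 - α δ}) :=
    Ideal.Quotient.nontrivial_iff.mpr hδ.span_one_sub_ne_top
  obtain ⟨c⟩ := exists_algHom_of_finiteType F (A ⧸ Ideal.span {1 - α δ})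
  let χ : A →+* F := c.toRingHom.comp (Ideal.Quotient.mk _)
  have hχ : ∀ y : k, χ (α y) = Φ y 1 :=
    apply_eq_of_apply_symm_single_one Φ (χ.comp α) (fun a => c.commutes a)
      (show c (Ideal.Quotient.mk _ (α δ)) = 1 by rw [Ideal.Quotient.mk_span_one_sub, map_one])
  refine ⟨Φ.symm.toRingHom.comp (RingHom.pi fun h => χ.comp (MulSemiringAction.toRingHom G A h)),
    fun g a => Φ.injective ?_, RingHom.ext fun y => Φ.injective ?_⟩
  · rw [hΦ]
    funext h
    simp [mul_smul]
  · funext h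
    simp [← hα, hχ, hΦ]

/-- A G-ring k is Nullstellensatzian in the category of G-rings iff it is
G-equivariantly isomorphic to Fun(G,F) (with action (g • φ) h = φ (h * g))
for some algebraically closed field F. -/
theorem stmt10 (G : Type) [Group G] [Fintype G] (k : Type) [CommRing k]
    [MulSemiringAction G k] :
    (Nontrivial k ∧
      ∀ (A : Type) [CommRing A] [MulSemiringAction G A] (α : k →+* A),
        (∀ (g : G) (x : k), α (g • x) = g • α x) →
        (@Algebra.FinitePresentation k A _ _ α.toAlgebra) →
        Nontrivial A →
        ∃ f : A →+* k, (∀ (g : G) (a : A), f (g • a) = g • f a) ∧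
          f.comp α = RingHom.id k) ↔
      ∃ (F : Type) (fld : Field F),
        letI : Field F := fld
        IsAlgClosed F ∧
          ∃ e : k ≃+* (G → F),
            ∀ (g : G) (x : k), e (g • x) = fun h => e x (h * g) := by
  constructor
  · exact IsNullstellensatzian.exists_isAlgClosed_ringEquiv
  · rintro ⟨F, fld, hF, Φ, hΦ⟩
    exact isNullstellensatzian_of_ringEquiv Φ hΦ
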